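/- Fix real constants E, K, n', σ'_f, ε'_f > 0, b, c < 0, and Lamé constants λ, μ > 0. For a real 3×3 matrix M define the stress σ(M) = λ·(tr M)·I + μ·(M + Mᵀ), and for a real 3×3 matrix A define its trace-free part A' = A − (tr A/3)·I and the von Mises stress σ_v(A) = √((3/2)·tr(A'·A')). Let φ : (0,∞) → (0,∞) be as in Lemma 3.1 and let g : ℝ → ℝ be g(s) = 1/φ(s) for s > 0, g(s) = 0 for s ≤ 0. Then the map from the space of real 3×3 matrices to ℝ given by M ↦ g(σ_v(σ(M))) — i.e. M ↦ 1/N_det(M) with the convention 1/∞ = 0 — is continuous. -/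

import Mathlib

open Filter Set Matrix

/-- The linear elastic stress tensor `σ(M) = λ (tr M) I + μ (M + Mᵀ)`. -/
noncomputable def stressTensor (lam μ : ℝ) (M : Matrix (Fin 3) (Fin 3) ℝ) :
    Matrix (Fin 3) (Fin 3) ℝ :=
  (lam * Matrix.trace M) • (1 : Matrix (Fin 3) (Fin 3) ℝ) + μ • (M + Mᵀ)

/-- The trace-free part `A' = A − (tr A / 3) I`. -/
noncomputable def traceFreePart (A : Matrix (Fin 3) (Fin 3) ℝ) :
    Matrix (Fin 3) (Fin 3) ℝ :=
  A - (Matrix.trace A / 3) • (1 : Matrix (Fin 3) (Fin 3) ℝ)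

/-- The von Mises stress `σ_v(A) = √((3/2) tr(A' A'))`. -/
noncomputable def vonMises (A : Matrix (Fin 3) (Fin 3) ℝ) : ℝ :=
  Real.sqrt ((3 / 2) * Matrix.trace (traceFreePart A * traceFreePart A))


/-
The von Mises stress of `σ(M)` is continuous in `M`, so it suffices that
`g = 1/φ` (extended by `0`) is continuous. Each of `SD`, `RO` is increasing and `CMB` is
strictly decreasing, so `φ = CMB⁻¹ ∘ RO ∘ SD` is decreasing and `g` is increasing. Since
`RO ∘ SD` maps `(0, ∞)` onto `(0, ∞)`, so does `φ`, hence `g` has range `[0, ∞)`; a monotone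
function whose range is an interval has no jumps.
-/

theorem continuous_vonMises_stressTensor (lam μ : ℝ) :
    Continuous fun M : Matrix (Fin 3) (Fin 3) ℝ => vonMises (stressTensor lam μ M) := by
  unfold vonMises traceFreePart stressTensor
  fun_prop

theorem Monotone.continuous_of_range_eq_Ici {g : ℝ → ℝ} {a : ℝ} (hg : Monotone g)
    (hrange : range g = Ici a) : Continuous g := by
  obtain ⟨x₀, hx₀⟩ : a ∈ range g := hrange ▸ self_mem_Ici
  have hflat : ∀ x ≤ x₀, g x = a := fun x hx =>
    le_antisymm (hx₀ ▸ hg hx) (hrange.subset (mem_range_self x))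
  -- Adding `min (x - x₀) 0` fills the gap below `a` and makes the function surjective.
  set G : ℝ → ℝ := fun x => g x + min (x - x₀) 0
  have hG : Continuous G := by
    refine (hg.add fun x y hxy => min_le_min_right 0 (by linarith)).continuous_of_surjective ?_
    intro y
    rcases le_or_gt y a with hy | hy
    · refine ⟨y - a + x₀, ?_⟩
      change g _ + min _ 0 = y
      rw [hflat _ (by linarith), min_eq_left (by linarith)]
      ring
    · obtain ⟨x, rfl⟩ : y ∈ range g := hrange ▸ hy.le
      have hx : x₀ ≤ x := le_of_not_gt fun hx => hy.ne' (hflat x hx.le)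
      exact ⟨x, by simp [hx]⟩
  have hgG : g = fun x => G x - min (x - x₀) 0 := by
    ext x
    simp [G]
  exact hgG ▸ hG.sub (by fun_prop)

theorem StrictAntiOn.antitoneOn_of_eqOn_comp {α β γ : Type*} [Preorder α] [LinearOrder β]
    [Preorder γ] {φ : α → β} {C : β → γ} {ψ : α → γ} {s : Set α} {t : Set β}
    (hC : StrictAntiOn C t) (hφ : MapsTo φ s t) (hψ : MonotoneOn ψ s) (heq : EqOn (C ∘ φ) ψ s) :
    AntitoneOn φ s := by
  intro x hx y hy hxy
  by_contra! hlt
  have hCφ : C (φ y) < C (φ x) := hC (hφ hx) (hφ hy) hlt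
  rw [show C (φ x) = ψ x from heq hx, show C (φ y) = ψ y from heq hy] at hCφ
  exact (hψ hx hy hxy).not_gt hCφ

theorem Set.InjOn.surjOn_of_eqOn_comp {α β γ : Type*} {φ : α → β} {C : β → γ} {ψ : α → γ}
    {s : Set α} {t : Set β} (hC : InjOn C t) (hφ : MapsTo φ s t) (hψ : SurjOn ψ s (C '' t))
    (heq : EqOn (C ∘ φ) ψ s) : SurjOn φ s t := by
  intro N hN
  obtain ⟨x, hx, hψx⟩ := hψ (mem_image_of_mem C hN)
  exact ⟨x, hx, hC (hφ hx) hN ((heq hx).trans hψx)⟩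

theorem continuous_ite_pos_one_div {φ : ℝ → ℝ} (hφ : MapsTo φ (Ioi 0) (Ioi 0))
    (hanti : AntitoneOn φ (Ioi 0)) (hsurj : SurjOn φ (Ioi 0) (Ioi 0)) :
    Continuous fun s => if 0 < s then 1 / φ s else 0 := by
  apply Monotone.continuous_of_range_eq_Ici (a := 0)
  · intro x y hxy
    by_cases hx : 0 < x
    · have hy := hx.trans_le hxy
      simp only [if_pos hx, if_pos hy]
      exact one_div_le_one_div_of_le (hφ hy) (hanti hx hy hxy)
    · by_cases hy : 0 < y
      · simp only [if_neg hx, if_pos hy]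
        exact (one_div_pos.mpr (hφ hy)).le
      · simp only [if_neg hx, if_neg hy, le_refl]
  · refine Subset.antisymm ?_ fun y hy => ?_
    · rintro _ ⟨s, rfl⟩
      simp only [mem_Ici]
      split_ifs with hs
      exacts [(one_div_pos.mpr (hφ hs)).le, le_rfl]
    · rcases (mem_Ici.mp hy).eq_or_lt with rfl | hy
      · exact ⟨0, if_neg (lt_irrefl 0)⟩
      · obtain ⟨s, hs, hφs⟩ := hsurj (one_div_pos.mpr hy)
        exact ⟨s, by simp only [if_pos (mem_Ioi.mp hs), hφs, one_div_one_div]⟩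

section MaterialLaws

variable {E K p : ℝ}

theorem strictMonoOn_sq_div_add_mul_rpow (hE : 0 < E) (hK : 0 < K) (hp : 0 ≤ p) :
    StrictMonoOn (fun t => t ^ 2 / E + t * (t / K) ^ p) (Ici 0) := by
  intro x hx y hy hxy
  simp only [mem_Ici] at hx hy
  have hsq : x ^ 2 / E < y ^ 2 / E := by gcongr
  have hmul : x * (x / K) ^ p ≤ y * (y / K) ^ p := by gcongr
  exact add_lt_add_of_lt_of_le hsq hmul

theorem strictMonoOn_div_add_rpow (hE : 0 < E) (hK : 0 < K) (hp : 0 ≤ p) :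
    StrictMonoOn (fun σ => σ / E + (σ / K) ^ p) (Ici 0) := by
  intro x hx y hy hxy
  simp only [mem_Ici] at hx hy
  have hdiv : x / E < y / E := by gcongr
  have hrpow : (x / K) ^ p ≤ (y / K) ^ p := by gcongr
  exact add_lt_add_of_lt_of_le hdiv hrpow

theorem surjOn_div_add_rpow (hE : 0 < E) (hK : 0 < K) (hp : 0 < p) :
    SurjOn (fun σ => σ / E + (σ / K) ^ p) (Ioi 0) (Ioi 0) := by
  intro y hy
  have hy : 0 < y := hy
  have hcont : Continuous fun σ : ℝ => σ / E + (σ / K) ^ p := by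
    have := Real.continuous_rpow_const hp.le
    fun_prop
  -- At `σ = E y` the linear term alone already reaches `y`.
  obtain ⟨σ, hσ, hσy⟩ : ∃ σ ∈ Icc 0 (E * y), σ / E + (σ / K) ^ p = y := by
    refine intermediate_value_Icc (by positivity) hcont.continuousOn ⟨?_, ?_⟩
    · simpa [Real.zero_rpow hp.ne'] using hy.le
    · have : 0 ≤ (E * y / K) ^ p := by positivity
      simp only [mul_div_cancel_left₀ y hE.ne']
      linarith
  refine ⟨σ, hσ.1.lt_of_ne ?_, hσy⟩
  rintro rfl
  simp [Real.zero_rpow hp.ne', hy.ne] at hσy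

theorem monotoneOn_of_sq_div_add_mul_rpow_eq {SD : ℝ → ℝ}
    (hSD : ∀ s, 0 < s → 0 < SD s ∧ SD s ^ 2 / E + SD s * (SD s / K) ^ p = s ^ 2 / E)
    (hE : 0 < E) (hK : 0 < K) (hp : 0 ≤ p) :
    MonotoneOn SD (Ioi 0) := by
  intro x hx y hy hxy
  rw [← (strictMonoOn_sq_div_add_mul_rpow hE hK hp).le_iff_le (hSD x hx).1.le (hSD y hy).1.le]
  simp only [(hSD x hx).2, (hSD y hy).2]
  gcongr
  exact (mem_Ioi.mp hx).le

theorem surjOn_of_sq_div_add_mul_rpow_eq {SD : ℝ → ℝ}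
    (hSD : ∀ s, 0 < s → 0 < SD s ∧ SD s ^ 2 / E + SD s * (SD s / K) ^ p = s ^ 2 / E)
    (hE : 0 < E) (hK : 0 < K) (hp : 0 ≤ p) :
    SurjOn SD (Ioi 0) (Ioi 0) := by
  intro t ht
  have ht : 0 < t := ht
  set s := Real.sqrt (E * (t ^ 2 / E + t * (t / K) ^ p))
  have hs : 0 < s := Real.sqrt_pos.mpr (by positivity)
  have hs_sq : s ^ 2 / E = t ^ 2 / E + t * (t / K) ^ p := by
    rw [Real.sq_sqrt (by positivity), mul_div_cancel_left₀ _ hE.ne']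
  exact ⟨s, hs, (strictMonoOn_sq_div_add_mul_rpow hE hK hp).injOn
    (hSD s hs).1.le ht.le ((hSD s hs).2.trans hs_sq)⟩

theorem strictAntiOn_mul_rpow_add_mul_rpow {a e b c : ℝ} (ha : 0 < a) (he : 0 < e)
    (hb : b < 0) (hc : c < 0) :
    StrictAntiOn (fun N => a * (2 * N) ^ b + e * (2 * N) ^ c) (Ioi 0) := by
  intro x hx y hy hxy
  have hx : 0 < x := hx
  have hb' : (2 * y) ^ b < (2 * x) ^ b := Real.rpow_lt_rpow_of_neg (by positivity) (by linarith) hb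
  have hc' : (2 * y) ^ c < (2 * x) ^ c := Real.rpow_lt_rpow_of_neg (by positivity) (by linarith) hc
  exact add_lt_add (mul_lt_mul_of_pos_left hb' ha) (mul_lt_mul_of_pos_left hc' he)

end MaterialLaws

theorem stmt7 (E K n' σf εf b c lam μ : ℝ) (hE : 0 < E) (hK : 0 < K) (hn : 0 < n')
    (hσf : 0 < σf) (hεf : 0 < εf) (hb : b < 0) (hc : c < 0)
    (RO CMB SD φ : ℝ → ℝ)
    (hRO : ∀ σ : ℝ, RO σ = σ / E + (σ / K) ^ (1 / n'))
    (hCMB : ∀ N : ℝ, CMB N = σf / E * (2 * N) ^ b + εf * (2 * N) ^ c)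
    (hSD : ∀ s : ℝ, 0 < s →
      0 < SD s ∧ (SD s) ^ 2 / E + SD s * (SD s / K) ^ (1 / n') = s ^ 2 / E)
    (hφ : ∀ σ : ℝ, 0 < σ → 0 < φ σ ∧ CMB (φ σ) = RO (SD σ))
    (g : ℝ → ℝ) (hg : ∀ s : ℝ, g s = if 0 < s then 1 / φ s else 0) :
    Continuous (fun M : Matrix (Fin 3) (Fin 3) ℝ => g (vonMises (stressTensor lam μ M))) := by
  have hp : 0 < 1 / n' := by positivity
  have hRO_mono : StrictMonoOn RO (Ici 0) := funext hRO ▸ strictMonoOn_div_add_rpow hE hK hp.le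
  have hRO_surj : SurjOn RO (Ioi 0) (Ioi 0) := funext hRO ▸ surjOn_div_add_rpow hE hK hp
  have hCMB_anti : StrictAntiOn CMB (Ioi 0) :=
    funext hCMB ▸ strictAntiOn_mul_rpow_add_mul_rpow (div_pos hσf hE) hεf hb hc
  have hCMB_maps : MapsTo CMB (Ioi 0) (Ioi 0) := fun N (hN : 0 < N) => by
    rw [mem_Ioi, hCMB]
    positivity
  have hSD_maps : MapsTo SD (Ioi 0) (Ioi 0) := fun s hs => (hSD s hs).1
  have hSD_mono := monotoneOn_of_sq_div_add_mul_rpow_eq hSD hE hK hp.le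
  have hSD_surj := surjOn_of_sq_div_add_mul_rpow_eq hSD hE hK hp.le
  have hφ_maps : MapsTo φ (Ioi 0) (Ioi 0) := fun s hs => (hφ s hs).1
  have hφ_eq : EqOn (CMB ∘ φ) (RO ∘ SD) (Ioi 0) := fun s hs => (hφ s hs).2
  have hφ_anti : AntitoneOn φ (Ioi 0) := hCMB_anti.antitoneOn_of_eqOn_comp hφ_maps
    (hRO_mono.monotoneOn.comp hSD_mono (hSD_maps.mono_right Ioi_subset_Ici_self)) hφ_eq
  have hφ_surj : SurjOn φ (Ioi 0) (Ioi 0) := hCMB_anti.injOn.surjOn_of_eqOn_comp hφ_maps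
    ((hRO_surj.comp hSD_surj).mono subset_rfl hCMB_maps.image_subset) hφ_eq
  exact funext hg ▸ (continuous_ite_pos_one_div hφ_maps hφ_anti hφ_surj).comp
    (continuous_vonMises_stressTensor lam μ)
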